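/- arXiv:2107.11695 — 2 statements merged into one kernel-verified Lean document; each statement's English description precedes it below -/
import Mathlib

section
/- Let V be a finite set and C a finite set of 3-element subsets of V. Let p0 be a 2-element subset of V contained in at least one member of C, and suppose that every 2-element subset q ≠ p0 that is contained in some triple t ∈ C with p0 ⊆ t has the property that every triple of C containing q also contains p0. Then for every cover S of C there exists a cover S' of C with p0 ∈ S' and |S'| ≤ |S|; in particular some minimum-cardinality cover contains p0. -/
/-! Take a cover `S` and a triple `t₀ ∈ C` containing `p0`; some `q₀ ∈ S` lies in `t₀`. By the
hypothesis on `p0`, every triple containing `q₀` also contains `p0`, so replacing `q₀` by `p0`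
in `S` still gives a cover, and it is no larger. Applying this exchange to a cover of minimum
size gives a minimum cover containing `p0`. -/

namespace Finset

variable {V : Type*} [DecidableEq V]

def IsPairCover (C S : Finset (Finset V)) : Prop :=
  (∀ q ∈ S, q.card = 2) ∧ ∀ t ∈ C, ∃ q ∈ S, q ⊆ t

theorem IsPairCover.exchange {C S : Finset (Finset V)} (hS : IsPairCover C S)
    {p q : Finset V} (hp : p.card = 2) (hqS : q ∈ S) (hqp : ∀ t ∈ C, q ⊆ t → p ⊆ t) :
    IsPairCover C (insert p (S.erase q)) ∧ (insert p (S.erase q)).card ≤ S.card := by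
  refine ⟨⟨?_, ?_⟩, ?_⟩
  · intro r hr
    rcases mem_insert.mp hr with rfl | hr
    · exact hp
    · exact hS.1 r (mem_of_mem_erase hr)
  · intro t ht
    obtain ⟨r, hrS, hrt⟩ := hS.2 t ht
    by_cases hrq : r = q
    · exact ⟨p, mem_insert_self _ _, hqp t ht (hrq ▸ hrt)⟩
    · exact ⟨r, mem_insert_of_mem (mem_erase.mpr ⟨hrq, hrS⟩), hrt⟩
  · calc (insert p (S.erase q)).card ≤ (S.erase q).card + 1 := card_insert_le _ _
      _ = S.card := card_erase_add_one hqS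

theorem isPairCover_biUnion_powersetCard {C : Finset (Finset V)}
    (hC : ∀ t ∈ C, 2 ≤ t.card) : IsPairCover C (C.biUnion (powersetCard 2)) := by
  refine ⟨fun q hq => ?_, fun t ht => ?_⟩
  · obtain ⟨t, -, hqt⟩ := mem_biUnion.mp hq
    exact (mem_powersetCard.mp hqt).2
  · obtain ⟨q, hq⟩ := powersetCard_nonempty.mpr (hC t ht)
    exact ⟨q, mem_biUnion.mpr ⟨t, ht, hq⟩, (mem_powersetCard.mp hq).1⟩

theorem exists_isPairCover_forall_card_le {C : Finset (Finset V)}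
    (hC : ∀ t ∈ C, 2 ≤ t.card) :
    ∃ S, IsPairCover C S ∧ ∀ S', IsPairCover C S' → S.card ≤ S'.card := by
  obtain ⟨S, hS, hmin⟩ := (measure (card : Finset (Finset V) → ℕ)).wf.has_min
    {S | IsPairCover C S} ⟨_, isPairCover_biUnion_powersetCard hC⟩
  exact ⟨S, hS, fun S' hS' => not_lt.mp (hmin S' hS')⟩

theorem IsPairCover.exists_mem_card_le {C S : Finset (Finset V)} (hS : IsPairCover C S)
    {p0 : Finset V} (hp0 : p0.card = 2) (hmem : ∃ t ∈ C, p0 ⊆ t)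
    (hprop : ∀ t ∈ C, p0 ⊆ t → ∀ q ⊆ t, q.card = 2 → q ≠ p0 → ∀ s ∈ C, q ⊆ s → p0 ⊆ s) :
    ∃ S', IsPairCover C S' ∧ p0 ∈ S' ∧ S'.card ≤ S.card := by
  obtain ⟨t₀, ht₀, hp0t₀⟩ := hmem
  obtain ⟨q₀, hq₀S, hq₀t₀⟩ := hS.2 t₀ ht₀
  by_cases hq₀ : q₀ = p0
  · exact ⟨S, hS, hq₀ ▸ hq₀S, le_rfl⟩
  · obtain ⟨hcover, hcard⟩ :=
      hS.exchange hp0 hq₀S (hprop t₀ ht₀ hp0t₀ q₀ hq₀t₀ (hS.1 q₀ hq₀S) hq₀)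
    exact ⟨_, hcover, mem_insert_self _ _, hcard⟩

end Finset

open Finset in
/-- Let `V` be a finite set and `C` a finite set of 3-element subsets of `V`.
A *cover* of `C` is a finset `S` of 2-element subsets of `V` such that every `t ∈ C` contains
some `q ∈ S`.  Let `p0` be a 2-element subset contained in at least one member of `C`, and
suppose every 2-element subset `q ≠ p0` contained in some triple `t ∈ C` with `p0 ⊆ t` has the
property that every triple of `C` containing `q` also contains `p0`.  Then for every cover `S`
there is a cover `S'` with `p0 ∈ S'` and `|S'| ≤ |S|`; in particular some minimum-cardinality
cover contains `p0`. -/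
theorem stmt_1 {V : Type*} [DecidableEq V]
    (C : Finset (Finset V)) (hC : ∀ t ∈ C, t.card = 3)
    (p0 : Finset V) (hp0 : p0.card = 2)
    (hmem : ∃ t ∈ C, p0 ⊆ t)
    (hprop : ∀ t ∈ C, p0 ⊆ t → ∀ q ⊆ t, q.card = 2 → q ≠ p0 →
      ∀ s ∈ C, q ⊆ s → p0 ⊆ s) :
    (∀ S : Finset (Finset V),
      (∀ q ∈ S, q.card = 2) → (∀ t ∈ C, ∃ q ∈ S, q ⊆ t) →
      ∃ S' : Finset (Finset V),
        (∀ q ∈ S', q.card = 2) ∧ (∀ t ∈ C, ∃ q ∈ S', q ⊆ t) ∧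
        p0 ∈ S' ∧ S'.card ≤ S.card) ∧
    (∃ S : Finset (Finset V),
      (∀ q ∈ S, q.card = 2) ∧ (∀ t ∈ C, ∃ q ∈ S, q ⊆ t) ∧ p0 ∈ S ∧
      ∀ S' : Finset (Finset V),
        (∀ q ∈ S', q.card = 2) → (∀ t ∈ C, ∃ q ∈ S', q ⊆ t) →
        S.card ≤ S'.card) := by
  refine ⟨fun S hS₂ hScov => ?_, ?_⟩
  · obtain ⟨S', ⟨hS'₂, hS'cov⟩, hp0S', hcard⟩ :=
      IsPairCover.exists_mem_card_le ⟨hS₂, hScov⟩ hp0 hmem hprop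
    exact ⟨S', hS'₂, hS'cov, hp0S', hcard⟩
  · obtain ⟨S, hS, hmin⟩ :=
      exists_isPairCover_forall_card_le fun t ht => by rw [hC t ht]; norm_num
    obtain ⟨S', ⟨hS'₂, hS'cov⟩, hp0S', hcard⟩ := hS.exists_mem_card_le hp0 hmem hprop
    exact ⟨S', hS'₂, hS'cov, hp0S', fun S'' h₂ hcov => hcard.trans (hmin S'' ⟨h₂, hcov⟩)⟩
end

section
/- Let n ≥ 1, let h : {0,1}^n × {0,1} → ℝ, let i ≠ j be indices in {1,…,n}, and let M be a real number with M > 0 and M > (max h − min h), where max and min are taken over the finite domain {0,1}^n × {0,1}. Then the maximum over all (x,y) ∈ {0,1}^n × {0,1} of h(x,y) − M·p(x_i, x_j, y) equals the maximum over all x ∈ {0,1}^n of h(x, x_i·x_j). -/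
/-- The Rosenberg penalty `p(a,b,y) = a·b − 2·a·y − 2·b·y + 3·y` on real arguments. -/
noncomputable def rosP (a b y : ℝ) : ℝ := a * b - 2 * a * y - 2 * b * y + 3 * y

open Set

theorem ciSup_sub_mul_penalty_eq {α β : Type*} [Finite α] [Nonempty β]
    (f P : α → ℝ) (g : β → α) (hPg : ∀ b, P (g b) = 0) (hP : ∀ a ∉ range g, 1 ≤ P a)
    (M : ℝ) (hM : (⨆ a, f a) - (⨅ a, f a) < M) :
    ⨆ a, (f a - M * P a) = ⨆ b, f (g b) := by
  have : Nonempty α := Nonempty.map g ‹_›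
  have hbdd : ∀ u : α → ℝ, BddAbove (range u) := fun u => (finite_range u).bddAbove
  have hbdd_feasible : BddAbove (range (f ∘ g)) := (hbdd f).mono (range_comp_subset_range g f)
  have hM0 : 0 < M :=
    (sub_nonneg.2 (ciInf_le_ciSup (finite_range f).bddBelow (hbdd f))).trans_lt hM
  apply le_antisymm
  · refine ciSup_le fun a => ?_
    by_cases ha : a ∈ range g
    · obtain ⟨b, rfl⟩ := ha
      rw [hPg, mul_zero, sub_zero]
      exact le_ciSup hbdd_feasible b
    · -- an infeasible point scores below `⨅ f`, hence below every feasible value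
      obtain ⟨b₀⟩ := ‹Nonempty β›
      calc f a - M * P a ≤ f a - M := by nlinarith [hP a ha]
        _ ≤ ⨅ a, f a := by linarith [le_ciSup (hbdd f) a]
        _ ≤ f (g b₀) := ciInf_le (finite_range f).bddBelow _
        _ ≤ ⨆ b, f (g b) := le_ciSup hbdd_feasible b₀
  · refine ciSup_le fun b => ?_
    simpa only [hPg, mul_zero, sub_zero] using le_ciSup (hbdd fun a => f a - M * P a) (g b)

lemma rosP_mul_eq_zero (a b : Fin 2) :
    rosP ((a : ℕ) : ℝ) ((b : ℕ) : ℝ) (((a * b : Fin 2) : ℕ) : ℝ) = 0 := by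
  fin_cases a <;> fin_cases b <;> norm_num [rosP]

lemma one_le_rosP_of_ne_mul {a b y : Fin 2} (hy : y ≠ a * b) :
    1 ≤ rosP ((a : ℕ) : ℝ) ((b : ℕ) : ℝ) ((y : ℕ) : ℝ) := by
  fin_cases a <;> fin_cases b <;> fin_cases y <;> simp_all <;> norm_num [rosP]

theorem stmt_7_general (n : ℕ)
    (h : ((Fin n → Fin 2) × Fin 2) → ℝ)
    (i j : Fin n)
    (M : ℝ)
    (hM : (⨆ z : (Fin n → Fin 2) × Fin 2, h z) - (⨅ z : (Fin n → Fin 2) × Fin 2, h z) < M) :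
    (⨆ z : (Fin n → Fin 2) × Fin 2,
        (h z - M * rosP ((z.1 i : ℕ) : ℝ) ((z.1 j : ℕ) : ℝ) ((z.2 : ℕ) : ℝ))) =
    ⨆ x : Fin n → Fin 2, h (x, x i * x j) := by
  refine ciSup_sub_mul_penalty_eq h _ (fun x => (x, x i * x j))
    (fun x => rosP_mul_eq_zero (x i) (x j)) (fun z hz => one_le_rosP_of_ne_mul ?_) M hM
  rintro hy
  exact hz ⟨z.1, Prod.ext rfl hy.symm⟩

/-- Let `n ≥ 1`, `h : {0,1}^n × {0,1} → ℝ`, `i ≠ j` indices, and `M` a real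
with `M > 0` and `M > max h − min h` (over the finite domain).  Then the maximum over
`(x,y) ∈ {0,1}^n × {0,1}` of `h(x,y) − M·p(x_i, x_j, y)` equals the maximum over
`x ∈ {0,1}^n` of `h(x, x_i·x_j)`. -/
theorem stmt_7 (n : ℕ) (hn : 1 ≤ n)
    (h : ((Fin n → Fin 2) × Fin 2) → ℝ)
    (i j : Fin n) (hij : i ≠ j)
    (M : ℝ) (hM0 : 0 < M)
    (hM : (⨆ z : (Fin n → Fin 2) × Fin 2, h z) - (⨅ z : (Fin n → Fin 2) × Fin 2, h z) < M) :
    (⨆ z : (Fin n → Fin 2) × Fin 2,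
        (h z - M * rosP ((z.1 i : ℕ) : ℝ) ((z.1 j : ℕ) : ℝ) ((z.2 : ℕ) : ℝ))) =
    ⨆ x : Fin n → Fin 2, h (x, x i * x j) :=
  stmt_7_general n h i j M hM
end
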